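/- Mutation-equivalence of Fano polygons, defined by the existence of a finite chain P ≅ P₀, P₁, …, Pₙ ≅ Q in which each P_{i+1} is a mutation of P_i (polygons considered up to GL₂(ℤ)-equivalence), is an equivalence relation: it is reflexive, symmetric and transitive. -/

import Mathlib

open Pointwise

/-- Embedding of the lattice `N = ℤ²` into `N_ℝ = ℝ²`. -/
def emb (v : ℤ × ℤ) : ℝ × ℝ := ((v.1 : ℝ), (v.2 : ℝ))

/-- The set of lattice points of `ℝ²`. -/
def latticePts : Set (ℝ × ℝ) := Set.range emb

/-- A lattice vector is primitive if its coordinates are coprime. -/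
def IsPrimitive (v : ℤ × ℤ) : Prop := Int.gcd v.1 v.2 = 1

/-- The pairing of `ω ∈ M = ℤ²` with a point of `ℝ²`. -/
def pairing (ω : ℤ × ℤ) (x : ℝ × ℝ) : ℝ := ω.1 * x.1 + ω.2 * x.2

/-- A lattice polytope: the convex hull of finitely many lattice points. -/
def IsLatticePolytope (S : Set (ℝ × ℝ)) : Prop :=
  ∃ V : Finset (ℤ × ℤ), S = convexHull ℝ (emb '' ↑V)

/-- A Fano polygon: a lattice polytope with `0` in its interior (hence full-dimensional)
whose vertices are all primitive lattice vectors. -/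
def IsFanoPolygon (P : Set (ℝ × ℝ)) : Prop :=
  IsLatticePolytope P ∧ (0 : ℝ × ℝ) ∈ interior P ∧
    ∀ x ∈ Set.extremePoints ℝ P, ∃ v : ℤ × ℤ, IsPrimitive v ∧ x = emb v

/-- The segment from the origin to `w`. -/
def seg (w : ℝ × ℝ) : Set (ℝ × ℝ) := convexHull ℝ {0, w}

/-- `ω_h(P)`: the convex hull of the lattice points of `P` at level `h` w.r.t. `ω`. -/
def levelHull (P : Set (ℝ × ℝ)) (ω : ℤ × ℤ) (h : ℤ) : Set (ℝ × ℝ) :=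
  convexHull ℝ {x | x ∈ P ∧ x ∈ latticePts ∧ pairing ω x = (h : ℝ)}

/-- Valid data for a mutation of `P`: a primitive `ω`, a primitive `vE` with `ω(vE) = 0`
(so that the factor is `F = conv{0, vE}`), and lattice polytopes `G h` for `h < 0` with
`{vertices of P at level h} ⊆ G h + |h| F ⊆ ω_h(P)`. -/
def IsMutationData (ω vE : ℤ × ℤ) (G : ℤ → Set (ℝ × ℝ)) (P : Set (ℝ × ℝ)) : Prop :=
  IsPrimitive ω ∧ IsPrimitive vE ∧ ω.1 * vE.1 + ω.2 * vE.2 = 0 ∧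
    ∀ h : ℤ, h < 0 → IsLatticePolytope (G h) ∧
      {x ∈ Set.extremePoints ℝ P | pairing ω x = (h : ℝ)} ⊆ G h + seg ((|h| : ℝ) • emb vE) ∧
      G h + seg ((|h| : ℝ) • emb vE) ⊆ levelHull P ω h

/-- The mutation `mut_{(ω,F)}(P)` determined by the data `(ω, vE, G)`. -/
def mutation (ω vE : ℤ × ℤ) (G : ℤ → Set (ℝ × ℝ)) (P : Set (ℝ × ℝ)) : Set (ℝ × ℝ) :=
  convexHull ℝ ((⋃ (h : ℤ) (_ : h < 0), G h) ∪
    (⋃ (h : ℤ) (_ : 0 ≤ h), levelHull P ω h + seg ((h : ℝ) • emb vE)))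

/-- `Q` is a mutation of `P`. -/
def IsMutationOf (Q P : Set (ℝ × ℝ)) : Prop :=
  ∃ ω vE G, IsMutationData ω vE G P ∧ Q = mutation ω vE G P

/-- `GL₂(ℤ)`-equivalence of subsets of `ℝ²`. -/
def UnimodularEquiv (P Q : Set (ℝ × ℝ)) : Prop :=
  ∃ a b c d : ℤ, (a * d - b * c = 1 ∨ a * d - b * c = -1) ∧
    Q = (fun x : ℝ × ℝ => ((a : ℝ) * x.1 + (b : ℝ) * x.2, (c : ℝ) * x.1 + (d : ℝ) * x.2)) '' P

/-- One step of mutation-equivalence: a `GL₂(ℤ)`-transformation or a mutation. -/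
def MutationStep (P Q : Set (ℝ × ℝ)) : Prop := UnimodularEquiv P Q ∨ IsMutationOf Q P

/-- Mutation-equivalence: a finite chain of mutations and `GL₂(ℤ)`-transformations. -/
def MutationEquiv : Set (ℝ × ℝ) → Set (ℝ × ℝ) → Prop := Relation.ReflTransGen MutationStep

/-- The face of `P` on which `pairing ω` is minimal (the edge of `P` with inner normal `ω`
when this face is one-dimensional). -/
def edgeOf (P : Set (ℝ × ℝ)) (ω : ℤ × ℤ) : Set (ℝ × ℝ) :=
  {x ∈ P | ∀ y ∈ P, pairing ω x ≤ pairing ω y}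

/-- `ω` is the primitive inner normal of an edge of `P`. -/
def IsEdgeNormal (P : Set (ℝ × ℝ)) (ω : ℤ × ℤ) : Prop :=
  IsPrimitive ω ∧ ∃ x ∈ edgeOf P ω, ∃ y ∈ edgeOf P ω, x ≠ y

/-- The lattice height of the edge of `P` with inner normal `ω`. -/
noncomputable def edgeHeight (P : Set (ℝ × ℝ)) (ω : ℤ × ℤ) : ℤ :=
  sSup {r : ℤ | ∀ x ∈ P, (-r : ℝ) ≤ pairing ω x}

/-- The number of lattice points on the edge of `P` with inner normal `ω`. -/
noncomputable def edgeLatticeCount (P : Set (ℝ × ℝ)) (ω : ℤ × ℤ) : ℕ :=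
  {v : ℤ × ℤ | emb v ∈ edgeOf P ω}.ncard

/-- The lattice length of the edge of `P` with inner normal `ω`. -/
noncomputable def edgeLength (P : Set (ℝ × ℝ)) (ω : ℤ × ℤ) : ℤ :=
  (edgeLatticeCount P ω : ℤ) - 1

/-- The total number of primitive T-cones of `P`: an edge of lattice length `l` and lattice
height `h` contributes `l / h` primitive T-cones. -/
noncomputable def numTCones (P : Set (ℝ × ℝ)) : ℕ :=
  {p : (ℤ × ℤ) × ℕ | IsEdgeNormal P p.1 ∧
    (p.2 : ℤ) < edgeLength P p.1 / edgeHeight P p.1}.ncard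

/-- The number of edges of `P` whose residual R-cone has lattice length `l` and
lattice height `h`. -/
noncomputable def numRes (P : Set (ℝ × ℝ)) (l h : ℤ) : ℕ :=
  {ω : ℤ × ℤ | IsEdgeNormal P ω ∧ edgeHeight P ω = h ∧
    edgeLength P ω % edgeHeight P ω = l}.ncard

/-- Every residual R-cone of `P` has its (lattice length, lattice height) in `S`. -/
def BasketIn (P : Set (ℝ × ℝ)) (S : Set (ℤ × ℤ)) : Prop :=
  ∀ ω : ℤ × ℤ, IsEdgeNormal P ω →
    edgeLength P ω % edgeHeight P ω = 0 ∨
      (edgeLength P ω % edgeHeight P ω, edgeHeight P ω) ∈ S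

/-- The number of lattice points on the boundary of `P`. -/
noncomputable def boundaryLatticeCount (P : Set (ℝ × ℝ)) : ℕ :=
  {v : ℤ × ℤ | emb v ∈ frontier P}.ncard

/-- A Fano polygon is minimal if no mutation of it has fewer boundary lattice points. -/
def IsMinimalPolygon (P : Set (ℝ × ℝ)) : Prop :=
  ∀ Q : Set (ℝ × ℝ), IsMutationOf Q P → boundaryLatticeCount P ≤ boundaryLatticeCount Q

/-- The maximal lattice height `m_P` of an edge of `P`. -/
noncomputable def maxLocalIndex (P : Set (ℝ × ℝ)) : ℤ :=
  sSup {h : ℤ | ∃ ω, IsEdgeNormal P ω ∧ edgeHeight P ω = h}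

/-- The sum of the vertices of `P`. -/
noncomputable def vertexSum (P : Set (ℝ × ℝ)) : ℝ × ℝ :=
  ∑ᶠ x ∈ Set.extremePoints ℝ P, x

/-- `ω` is the inner normal of a special facet of `P`: the sum of the vertices of `P`
lies in the cone `ℝ_{≥0} E` spanned by the corresponding edge `E`. -/
def IsSpecialFacet (P : Set (ℝ × ℝ)) (ω : ℤ × ℤ) : Prop :=
  IsEdgeNormal P ω ∧ ∃ (c : ℝ) (x : ℝ × ℝ), 0 ≤ c ∧ x ∈ edgeOf P ω ∧ vertexSum P = c • x

/-- The convex hull of a list of lattice points. -/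
def poly (V : List (ℤ × ℤ)) : Set (ℝ × ℝ) := convexHull ℝ (emb '' {v | v ∈ V})

/-!
Reflexivity and transitivity hold in any reflexive-transitive closure, so the content is
symmetry: each step can be reversed, and steps preserve lattice polytopes so that reversals
can be chained. A `GL₂(ℤ)` map with determinant `δ = ±1` is undone by the integer matrix
`δ • adj`. The mutation `Q = mut_{(ω,F)}(P)`, `F = conv{0, vE}`, is undone by mutating `Q`
with respect to `-ω`, the same factor `F` and `G'_h = ω_{-h}(P)`. The key point is that every
`x ∈ Q` with `ω(x) = -k ≤ 0` satisfies `x + t • vE ∈ P` for `0 ≤ t ≤ k`: the generators of `Q`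
lie in the convex set of points `x` with `x + a • vE, x + b • vE ∈ P` for some `a ≤ 0` and
`b ≥ -ω(x)`, hence so does `Q`, and `P` contains the segment between those two points.
-/

open Set

lemma emb_zsmul (n : ℤ) (v : ℤ × ℤ) : emb (n • v) = (n : ℝ) • emb v := by
  simp [emb]

lemma emb_zero : emb 0 = 0 := Prod.ext Int.cast_zero Int.cast_zero

lemma image_emb_add (V W : Set (ℤ × ℤ)) : emb '' (V + W) = emb '' V + emb '' W :=
  image_add ((Int.castAddHom ℝ).prodMap (Int.castAddHom ℝ))

lemma IsPrimitive.neg {v : ℤ × ℤ} (hv : IsPrimitive v) : IsPrimitive (-v) := by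
  simpa [IsPrimitive, Int.neg_gcd, Int.gcd_neg] using hv

def pairingLinearMap (ω : ℤ × ℤ) : ℝ × ℝ →ₗ[ℝ] ℝ where
  toFun := pairing ω
  map_add' x y := by simp only [pairing, Prod.fst_add, Prod.snd_add]; ring
  map_smul' t x := by
    simp only [pairing, Prod.smul_fst, Prod.smul_snd, smul_eq_mul, RingHom.id_apply]; ring

lemma pairing_add (ω : ℤ × ℤ) (x y : ℝ × ℝ) : pairing ω (x + y) = pairing ω x + pairing ω y :=
  (pairingLinearMap ω).map_add x y

lemma pairing_smul (ω : ℤ × ℤ) (t : ℝ) (x : ℝ × ℝ) : pairing ω (t • x) = t * pairing ω x :=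
  (pairingLinearMap ω).map_smul t x

lemma pairing_neg (ω : ℤ × ℤ) (x : ℝ × ℝ) : pairing (-ω) x = -pairing ω x := by
  simp only [pairing, Prod.fst_neg, Prod.snd_neg, Int.cast_neg]; ring

lemma pairing_emb (ω v : ℤ × ℤ) : pairing ω (emb v) = ((ω.1 * v.1 + ω.2 * v.2 : ℤ) : ℝ) := by
  simp [pairing, emb]

lemma mem_seg_iff {w x : ℝ × ℝ} : x ∈ seg w ↔ ∃ t : ℝ, 0 ≤ t ∧ t ≤ 1 ∧ x = t • w := by
  simp only [seg, convexHull_pair, segment_eq_image, mem_image, mem_Icc, smul_zero, zero_add]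
  exact ⟨fun ⟨t, ⟨h0, h1⟩, hx⟩ => ⟨t, h0, h1, hx.symm⟩, fun ⟨t, h0, h1, hx⟩ => ⟨t, ⟨h0, h1⟩, hx.symm⟩⟩

lemma zero_mem_seg (w : ℝ × ℝ) : (0 : ℝ × ℝ) ∈ seg w :=
  subset_convexHull ℝ _ (mem_insert _ _)

lemma self_mem_seg (w : ℝ × ℝ) : w ∈ seg w :=
  subset_convexHull ℝ _ (mem_insert_of_mem _ rfl)

lemma mem_add_seg {S : Set (ℝ × ℝ)} {x : ℝ × ℝ} (hx : x ∈ S) (w : ℝ × ℝ) : x ∈ S + seg w :=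
  add_zero x ▸ add_mem_add hx (zero_mem_seg w)

lemma pairing_eq_zero_of_mem_seg {ω vE : ℤ × ℤ} (hperp : ω.1 * vE.1 + ω.2 * vE.2 = 0)
    {c : ℝ} {z : ℝ × ℝ} (hz : z ∈ seg (c • emb vE)) : pairing ω z = 0 := by
  obtain ⟨t, -, -, rfl⟩ := mem_seg_iff.1 hz
  simp [pairing_smul, pairing_emb, hperp]

lemma levelHull_subset {P : Set (ℝ × ℝ)} (hP : Convex ℝ P) (ω : ℤ × ℤ) (h : ℤ) :
    levelHull P ω h ⊆ P :=
  convexHull_min (fun _ hx => hx.1) hP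

lemma pairing_of_mem_levelHull {P : Set (ℝ × ℝ)} {ω : ℤ × ℤ} {h : ℤ} {x : ℝ × ℝ}
    (hx : x ∈ levelHull P ω h) : pairing ω x = h :=
  convexHull_min (fun _ hy => hy.2.2) (convex_hyperplane (pairingLinearMap ω).isLinear _) hx

lemma pairing_of_mem_levelHull_add_seg {P : Set (ℝ × ℝ)} {ω vE : ℤ × ℤ} {h : ℤ} {c : ℝ}
    (hperp : ω.1 * vE.1 + ω.2 * vE.2 = 0) {x : ℝ × ℝ}
    (hx : x ∈ levelHull P ω h + seg (c • emb vE)) : pairing ω x = h := by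
  obtain ⟨y, hy, z, hz, rfl⟩ := hx
  rw [pairing_add, pairing_of_mem_levelHull hy, pairing_eq_zero_of_mem_seg hperp hz, add_zero]

lemma emb_mem_levelHull {P : Set (ℝ × ℝ)} (ω : ℤ × ℤ) {v : ℤ × ℤ} (hv : emb v ∈ P) :
    emb v ∈ levelHull P ω (ω.1 * v.1 + ω.2 * v.2) :=
  subset_convexHull ℝ _ ⟨hv, ⟨v, rfl⟩, pairing_emb ω v⟩

lemma isLatticePolytope_empty : IsLatticePolytope ∅ :=
  ⟨∅, by simp⟩

lemma isLatticePolytope_seg (n : ℤ) (v : ℤ × ℤ) : IsLatticePolytope (seg ((n : ℝ) • emb v)) := by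
  classical
  refine ⟨{0, n • v}, ?_⟩
  rw [Finset.coe_insert, Finset.coe_singleton, image_pair, emb_zsmul, seg, emb_zero]

namespace IsLatticePolytope

variable {P Q : Set (ℝ × ℝ)}

lemma convex (hP : IsLatticePolytope P) : Convex ℝ P := by
  obtain ⟨V, rfl⟩ := hP
  exact convex_convexHull ℝ _

lemma isCompact (hP : IsLatticePolytope P) : IsCompact P := by
  obtain ⟨V, rfl⟩ := hP
  exact (V.finite_toSet.image emb).isCompact_convexHull ℝ

lemma finite_latticePoints (hP : IsLatticePolytope P) : {v : ℤ × ℤ | emb v ∈ P}.Finite :=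
  ((Int.isClosedEmbedding_coe_real.prodMap Int.isClosedEmbedding_coe_real).isCompact_preimage
    hP.isCompact).finite_of_discrete

lemma exists_eq_emb_of_mem_extremePoints (hP : IsLatticePolytope P) {x : ℝ × ℝ}
    (hx : x ∈ P.extremePoints ℝ) : ∃ v, x = emb v := by
  obtain ⟨V, rfl⟩ := hP
  obtain ⟨v, -, rfl⟩ := extremePoints_convexHull_subset hx
  exact ⟨v, rfl⟩

lemma convexHull_extremePoints (hP : IsLatticePolytope P) :
    convexHull ℝ (P.extremePoints ℝ) = P := by
  obtain ⟨V, rfl⟩ := hP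
  have hfin : (extremePoints ℝ (convexHull ℝ (emb '' (V : Set (ℤ × ℤ))))).Finite :=
    (V.finite_toSet.image emb).subset extremePoints_convexHull_subset
  rw [← (hfin.isCompact_convexHull ℝ).isClosed.closure_eq]
  exact closure_convexHull_extremePoints ((V.finite_toSet.image emb).isCompact_convexHull ℝ)
    (convex_convexHull ℝ _)

protected lemma add (hP : IsLatticePolytope P) (hQ : IsLatticePolytope Q) :
    IsLatticePolytope (P + Q) := by
  classical
  obtain ⟨V, rfl⟩ := hP
  obtain ⟨W, rfl⟩ := hQ
  exact ⟨V + W, by rw [Finset.coe_add, image_emb_add, convexHull_add]⟩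

protected lemma levelHull (hP : IsLatticePolytope P) (ω : ℤ × ℤ) (h : ℤ) :
    IsLatticePolytope (levelHull P ω h) := by
  refine ⟨(hP.finite_latticePoints.inter_of_left {v | ω.1 * v.1 + ω.2 * v.2 = h}).toFinset, ?_⟩
  rw [Finite.coe_toFinset, levelHull]
  congr 1
  ext x
  constructor
  · rintro ⟨hxP, ⟨v, rfl⟩, hv⟩
    exact ⟨v, ⟨hxP, by rw [pairing_emb] at hv; exact_mod_cast hv⟩, rfl⟩
  · rintro ⟨v, ⟨hvP, hv⟩, rfl⟩
    exact ⟨hvP, ⟨v, rfl⟩, by rw [pairing_emb, show _ = h from hv]⟩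

lemma convexHull_union {X Y : Set (ℝ × ℝ)} (hX : IsLatticePolytope (convexHull ℝ X))
    (hY : IsLatticePolytope (convexHull ℝ Y)) : IsLatticePolytope (convexHull ℝ (X ∪ Y)) := by
  classical
  obtain ⟨V, hV⟩ := hX
  obtain ⟨W, hW⟩ := hY
  refine ⟨V ∪ W, ?_⟩
  rw [← convexHull_convexHull_union_left, ← convexHull_convexHull_union_right, hV, hW,
    convexHull_convexHull_union_left, convexHull_convexHull_union_right, Finset.coe_union,
    image_union]

lemma subset_levelHull {T : Set (ℝ × ℝ)} (hT : IsLatticePolytope T) (hTP : T ⊆ P) {ω : ℤ × ℤ}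
    {h : ℤ} (hlev : ∀ x ∈ T, pairing ω x = h) : T ⊆ levelHull P ω h := by
  obtain ⟨V, rfl⟩ := hT
  refine convexHull_mono ?_
  rintro _ ⟨v, hv, rfl⟩
  have hvT := subset_convexHull ℝ _ (mem_image_of_mem emb hv)
  exact ⟨hTP hvT, ⟨v, rfl⟩, hlev _ hvT⟩

lemma finite_setOf_levelHull_nonempty (hP : IsLatticePolytope P) (ω : ℤ × ℤ) :
    {h : ℤ | (levelHull P ω h).Nonempty}.Finite := by
  refine (hP.finite_latticePoints.image fun v => ω.1 * v.1 + ω.2 * v.2).subset ?_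
  rintro h hne
  obtain ⟨_, hxP, ⟨v, rfl⟩, hv⟩ := convexHull_nonempty_iff.1 hne
  exact ⟨v, hxP, by rw [pairing_emb] at hv; exact_mod_cast hv⟩

end IsLatticePolytope

lemma isLatticePolytope_convexHull_biUnion {ι : Type*} {I : Set ι} {T : ι → Set (ℝ × ℝ)}
    (hT : ∀ i ∈ I, IsLatticePolytope (T i)) (hfin : {i ∈ I | (T i).Nonempty}.Finite) :
    IsLatticePolytope (convexHull ℝ (⋃ i ∈ I, T i)) := by
  have hunion : ⋃ i ∈ I, T i = ⋃ i ∈ {i ∈ I | (T i).Nonempty}, T i := by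
    ext x
    simp only [mem_iUnion, mem_sep_iff, exists_prop]
    exact ⟨fun ⟨i, hi, hx⟩ => ⟨i, ⟨hi, x, hx⟩, hx⟩, fun ⟨i, ⟨hi, _⟩, hx⟩ => ⟨i, hi, hx⟩⟩
  rw [hunion]
  refine hfin.induction_on_subset _ (by simpa using isLatticePolytope_empty) ?_
  intro i J hi _ _ hJ
  rw [biUnion_insert]
  refine IsLatticePolytope.convexHull_union ?_ hJ
  rw [(hT i hi.1).convex.convexHull_eq]
  exact hT i hi.1

section Shift

variable {E : Type*} [AddCommGroup E] [Module ℝ E] {P : Set E}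

lemma Convex.add_smul_mem_of_le (hP : Convex ℝ P) {x u : E} {a b t : ℝ} (ha : x + a • u ∈ P)
    (hb : x + b • u ∈ P) (hat : a ≤ t) (htb : t ≤ b) : x + t • u ∈ P :=
  ((hP.translate_preimage_right x).linear_preimage (LinearMap.id.smulRight u)).ordConnected.out
    ha hb ⟨hat, htb⟩

lemma Convex.convex_setOf_exists_add_smul_mem (hP : Convex ℝ P) (f : E →ₗ[ℝ] ℝ) (u : E) :
    Convex ℝ {x | ∃ a b : ℝ, a ≤ 0 ∧ -f x ≤ b ∧ x + a • u ∈ P ∧ x + b • u ∈ P} := by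
  rintro x ⟨a, b, ha, hb, hxa, hxb⟩ y ⟨a', b', ha', hb', hya, hyb⟩ s t hs ht hst
  refine ⟨s * a + t * a', s * b + t * b', by nlinarith, ?_, ?_, ?_⟩
  · rw [map_add, map_smul, map_smul, smul_eq_mul, smul_eq_mul]
    nlinarith
  · convert hP hxa hya hs ht hst using 1
    module
  · convert hP hxb hyb hs ht hst using 1
    module

end Shift

def mutationGenerators (ω vE : ℤ × ℤ) (G : ℤ → Set (ℝ × ℝ)) (P : Set (ℝ × ℝ)) :
    Set (ℝ × ℝ) :=
  (⋃ (h : ℤ) (_ : h < 0), G h) ∪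
    (⋃ (h : ℤ) (_ : 0 ≤ h), levelHull P ω h + seg ((h : ℝ) • emb vE))

section Mutation

variable {ω vE : ℤ × ℤ} {G : ℤ → Set (ℝ × ℝ)} {P : Set (ℝ × ℝ)}

lemma mem_mutationGenerators {x : ℝ × ℝ} :
    x ∈ mutationGenerators ω vE G P ↔
      (∃ h < 0, x ∈ G h) ∨ ∃ h, 0 ≤ h ∧ x ∈ levelHull P ω h + seg ((h : ℝ) • emb vE) := by
  simp [mutationGenerators]

lemma subset_mutation_of_neg {h : ℤ} (hh : h < 0) : G h ⊆ mutation ω vE G P :=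
  fun _ hx => subset_convexHull ℝ _ (mem_mutationGenerators.2 (Or.inl ⟨h, hh, hx⟩))

lemma levelHull_add_seg_subset_mutation {h : ℤ} (hh : 0 ≤ h) :
    levelHull P ω h + seg ((h : ℝ) • emb vE) ⊆ mutation ω vE G P :=
  fun _ hx => subset_convexHull ℝ _ (mem_mutationGenerators.2 (Or.inr ⟨h, hh, hx⟩))

namespace IsMutationData

lemma subset_levelHull (hd : IsMutationData ω vE G P) {h : ℤ} (hh : h < 0) :
    G h ⊆ levelHull P ω h :=
  fun _ hx => (hd.2.2.2 h hh).2.2 (mem_add_seg hx _)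

lemma mem_levelHull_add_seg_of_mem_extremePoints (hd : IsMutationData ω vE G P) {k : ℤ}
    (hk : 0 ≤ k) {x : ℝ × ℝ} (hx : x ∈ (mutation ω vE G P).extremePoints ℝ)
    (hxk : pairing ω x = k) : x ∈ levelHull P ω k + seg ((k : ℝ) • emb vE) := by
  rcases mem_mutationGenerators.1 (extremePoints_convexHull_subset hx) with
    ⟨h, hh, hxG⟩ | ⟨h, -, hx⟩
  · have : (h : ℝ) = k := (pairing_of_mem_levelHull (hd.subset_levelHull hh hxG)).symm.trans hxk
    exact absurd (Int.cast_inj.1 this) (by omega)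
  · have : (h : ℝ) = k := (pairing_of_mem_levelHull_add_seg hd.2.2.1 hx).symm.trans hxk
    rwa [← Int.cast_inj.1 this]

lemma add_smul_mem_of_mem_mutation (hd : IsMutationData ω vE G P) (hP : Convex ℝ P)
    {x : ℝ × ℝ} (hx : x ∈ mutation ω vE G P) {t : ℝ} (ht0 : 0 ≤ t) (ht : t ≤ -pairing ω x) :
    x + t • emb vE ∈ P := by
  have hgen : mutationGenerators ω vE G P ⊆
      {x | ∃ a b : ℝ, a ≤ 0 ∧ -pairingLinearMap ω x ≤ b ∧
        x + a • emb vE ∈ P ∧ x + b • emb vE ∈ P} := by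
    intro x hx
    rcases mem_mutationGenerators.1 hx with ⟨h, hh, hxG⟩ | ⟨h, hh, y, hy, z, hz, rfl⟩
    · have hxh : pairing ω x = h := pairing_of_mem_levelHull (hd.subset_levelHull hh hxG)
      have hseg : (-h : ℝ) • emb vE ∈ seg (|(h : ℝ)| • emb vE) := by
        rw [abs_of_neg (Int.cast_lt_zero.2 hh)]
        exact self_mem_seg _
      refine ⟨0, -h, le_rfl, (congrArg Neg.neg hxh).le, ?_, ?_⟩
      · rw [zero_smul, add_zero]
        exact levelHull_subset hP ω h (hd.subset_levelHull hh hxG)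
      · exact levelHull_subset hP ω h ((hd.2.2.2 h hh).2.2 (add_mem_add hxG hseg))
    · obtain ⟨τ, hτ0, hτ1, rfl⟩ := mem_seg_iff.1 hz
      have hyz : y + τ • (h : ℝ) • emb vE + (-(τ * h)) • emb vE = y := by module
      have hyh : pairingLinearMap ω (y + τ • (h : ℝ) • emb vE) = h :=
        pairing_of_mem_levelHull_add_seg hd.2.2.1 (add_mem_add hy hz)
      have hyP : y ∈ P := levelHull_subset hP ω h hy
      have hh' : (0 : ℝ) ≤ h := Int.cast_nonneg hh
      refine ⟨-(τ * h), -(τ * h), neg_nonpos.2 (mul_nonneg hτ0 hh'), ?_, by rwa [hyz],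
        by rwa [hyz]⟩
      rw [hyh]
      nlinarith
  obtain ⟨a, b, ha, hb, hxa, hxb⟩ :=
    convexHull_min hgen (hP.convex_setOf_exists_add_smul_mem _ _) hx
  exact hP.add_smul_mem_of_le hxa hxb (ha.trans ht0) (ht.trans hb)

lemma isLatticePolytope_mutation (hd : IsMutationData ω vE G P) (hP : IsLatticePolytope P) :
    IsLatticePolytope (mutation ω vE G P) := by
  refine IsLatticePolytope.convexHull_union ?_ ?_
  · refine isLatticePolytope_convexHull_biUnion (I := {h | h < 0})
      (fun h hh => (hd.2.2.2 h hh).1) ((hP.finite_setOf_levelHull_nonempty ω).subset ?_)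
    exact fun h ⟨hh, hne⟩ => hne.mono (hd.subset_levelHull hh)
  · refine isLatticePolytope_convexHull_biUnion (I := {h | 0 ≤ h})
      (fun h _ => (hP.levelHull ω h).add (isLatticePolytope_seg h vE))
      ((hP.finite_setOf_levelHull_nonempty ω).subset ?_)
    exact fun h ⟨_, hne⟩ => (add_nonempty.1 hne).1

lemma levelHull_add_seg_subset_levelHull_mutation (hd : IsMutationData ω vE G P)
    (hP : IsLatticePolytope P) {k : ℤ} (hk : 0 ≤ k) :
    levelHull P ω k + seg ((k : ℝ) • emb vE) ⊆ levelHull (mutation ω vE G P) (-ω) (-k) := by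
  refine ((hP.levelHull ω k).add (isLatticePolytope_seg k vE)).subset_levelHull
    (levelHull_add_seg_subset_mutation hk) fun x hx => ?_
  rw [pairing_neg, pairing_of_mem_levelHull_add_seg hd.2.2.1 hx, Int.cast_neg]

lemma subset_levelHull_mutation (hd : IsMutationData ω vE G P) {h : ℤ} (hh : h < 0) :
    G h ⊆ levelHull (mutation ω vE G P) (-ω) (-h) := by
  refine (hd.2.2.2 h hh).1.subset_levelHull (subset_mutation_of_neg hh) fun x hx => ?_
  rw [pairing_neg, pairing_of_mem_levelHull (hd.subset_levelHull hh hx), Int.cast_neg]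

lemma neg (hd : IsMutationData ω vE G P) (hP : IsLatticePolytope P) :
    IsMutationData (-ω) vE (fun h => levelHull P ω (-h)) (mutation ω vE G P) := by
  refine ⟨hd.1.neg, hd.2.1, ?_, fun h hh => ⟨hP.levelHull ω (-h), ?_, ?_⟩⟩
  · simp only [Prod.fst_neg, Prod.snd_neg]
    linarith [hd.2.2.1]
  all_goals rw [← Int.cast_abs, abs_of_neg hh]
  · rintro x ⟨hx, hxh⟩
    refine hd.mem_levelHull_add_seg_of_mem_extremePoints (by omega) hx ?_
    rw [pairing_neg] at hxh
    rw [Int.cast_neg, ← hxh, neg_neg]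
  · simpa using hd.levelHull_add_seg_subset_levelHull_mutation hP (k := -h) (by omega)

lemma mutation_neg_mutation (hd : IsMutationData ω vE G P) (hP : IsLatticePolytope P) :
    mutation (-ω) vE (fun h => levelHull P ω (-h)) (mutation ω vE G P) = P := by
  refine (convexHull_min (fun x hx => ?_) hP.convex).antisymm ?_
  · rcases mem_mutationGenerators.1 hx with ⟨h, -, hx⟩ | ⟨h, hh, y, hy, z, hz, rfl⟩
    · exact levelHull_subset hP.convex ω (-h) hx
    · obtain ⟨τ, hτ0, hτ1, rfl⟩ := mem_seg_iff.1 hz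
      have hyQ : y ∈ mutation ω vE G P := levelHull_subset (convex_convexHull ℝ _) _ _ hy
      have hyh : pairing ω y = -h := by
        rw [← neg_neg (pairing ω y), ← pairing_neg, pairing_of_mem_levelHull hy]
      have hh' : (0 : ℝ) ≤ h := Int.cast_nonneg hh
      rw [smul_smul]
      exact hd.add_smul_mem_of_mem_mutation hP.convex hyQ (by positivity)
        (by rw [hyh, neg_neg]; nlinarith)
  · conv_lhs => rw [← hP.convexHull_extremePoints]
    refine convexHull_mono fun x hx => mem_mutationGenerators.2 ?_
    obtain ⟨v, rfl⟩ := hP.exists_eq_emb_of_mem_extremePoints hx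
    have hvP : emb v ∈ P := extremePoints_subset hx
    rcases lt_trichotomy (ω.1 * v.1 + ω.2 * v.2) 0 with hl | hl | hl
    · obtain ⟨g, hg, z, hz, hgz⟩ := (hd.2.2.2 _ hl).2.1 ⟨hx, pairing_emb ω v⟩
      refine Or.inr ⟨-(ω.1 * v.1 + ω.2 * v.2), by omega, ?_⟩
      rw [← hgz, Int.cast_neg, ← abs_of_neg (Int.cast_lt_zero.2 hl)]
      exact add_mem_add (hd.subset_levelHull_mutation hl hg) hz
    · refine Or.inr ⟨0, le_rfl, mem_add_seg ?_ _⟩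
      have hv0 := hd.levelHull_add_seg_subset_levelHull_mutation hP le_rfl
        (mem_add_seg (hl ▸ emb_mem_levelHull ω hvP) _)
      rwa [neg_zero] at hv0
    · refine Or.inl ⟨_, neg_lt_zero.2 hl, ?_⟩
      rw [neg_neg]
      exact emb_mem_levelHull ω hvP

end IsMutationData

end Mutation

def intMatrixMap (a b c d : ℤ) : ℝ × ℝ →ₗ[ℝ] ℝ × ℝ where
  toFun x := ((a : ℝ) * x.1 + (b : ℝ) * x.2, (c : ℝ) * x.1 + (d : ℝ) * x.2)
  map_add' x y := by simp only [Prod.fst_add, Prod.snd_add, Prod.mk_add_mk]; ring_nf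
  map_smul' t x := by
    simp only [Prod.smul_fst, Prod.smul_snd, smul_eq_mul, RingHom.id_apply, Prod.smul_mk]; ring_nf

lemma intMatrixMap_emb (a b c d : ℤ) (v : ℤ × ℤ) :
    intMatrixMap a b c d (emb v) = emb (a * v.1 + b * v.2, c * v.1 + d * v.2) := by
  simp [intMatrixMap, emb]

lemma intMatrixMap_adjugate_apply {a b c d : ℤ} (hdet : (a * d - b * c) ^ 2 = 1) (x : ℝ × ℝ) :
    intMatrixMap ((a * d - b * c) * d) (-((a * d - b * c) * b)) (-((a * d - b * c) * c))
      ((a * d - b * c) * a) (intMatrixMap a b c d x) = x := by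
  have hdet' : ((a : ℝ) * d - b * c) ^ 2 = 1 := by exact_mod_cast hdet
  simp only [intMatrixMap, LinearMap.coe_mk, AddHom.coe_mk, Int.cast_mul, Int.cast_neg,
    Int.cast_sub]
  ext
  · linear_combination x.1 * hdet'
  · linear_combination x.2 * hdet'

lemma IsLatticePolytope.image_intMatrixMap {P : Set (ℝ × ℝ)} (hP : IsLatticePolytope P)
    (a b c d : ℤ) : IsLatticePolytope (intMatrixMap a b c d '' P) := by
  classical
  obtain ⟨V, rfl⟩ := hP
  refine ⟨V.image fun v => (a * v.1 + b * v.2, c * v.1 + d * v.2), ?_⟩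
  rw [LinearMap.image_convexHull, image_image, Finset.coe_image, image_image]
  simp only [intMatrixMap_emb]

namespace UnimodularEquiv

variable {P Q : Set (ℝ × ℝ)}

lemma symm (h : UnimodularEquiv P Q) : UnimodularEquiv Q P := by
  obtain ⟨a, b, c, d, hdet, rfl⟩ := h
  have hsq : (a * d - b * c) ^ 2 = 1 := by rcases hdet with h | h <;> rw [h] <;> norm_num
  refine ⟨(a * d - b * c) * d, -((a * d - b * c) * b), -((a * d - b * c) * c),
    (a * d - b * c) * a, ?_, ?_⟩
  · rcases hdet with h | h
    · left; linear_combination ((a * d - b * c) ^ 2 + (a * d - b * c) + 1) * h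
    · right; linear_combination ((a * d - b * c) ^ 2 - (a * d - b * c) + 1) * h
  · change P = intMatrixMap _ _ _ _ '' (intMatrixMap a b c d '' P)
    rw [image_image]
    simp only [intMatrixMap_adjugate_apply hsq, image_id']

lemma isLatticePolytope (h : UnimodularEquiv P Q) (hP : IsLatticePolytope P) :
    IsLatticePolytope Q := by
  obtain ⟨a, b, c, d, -, rfl⟩ := h
  exact hP.image_intMatrixMap a b c d

end UnimodularEquiv

namespace IsMutationOf

variable {P Q : Set (ℝ × ℝ)}

lemma symm (h : IsMutationOf Q P) (hP : IsLatticePolytope P) : IsMutationOf P Q := by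
  obtain ⟨ω, vE, G, hd, rfl⟩ := h
  exact ⟨-ω, vE, _, hd.neg hP, (hd.mutation_neg_mutation hP).symm⟩

lemma isLatticePolytope (h : IsMutationOf Q P) (hP : IsLatticePolytope P) :
    IsLatticePolytope Q := by
  obtain ⟨ω, vE, G, hd, rfl⟩ := h
  exact hd.isLatticePolytope_mutation hP

end IsMutationOf

namespace MutationStep

variable {P Q : Set (ℝ × ℝ)}

lemma symm (h : MutationStep P Q) (hP : IsLatticePolytope P) : MutationStep Q P :=
  h.imp UnimodularEquiv.symm (fun h => h.symm hP)

lemma isLatticePolytope (h : MutationStep P Q) (hP : IsLatticePolytope P) :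
    IsLatticePolytope Q :=
  h.elim (fun h => h.isLatticePolytope hP) (fun h => h.isLatticePolytope hP)

end MutationStep

namespace MutationEquiv

variable {P Q : Set (ℝ × ℝ)}

lemma isLatticePolytope (h : MutationEquiv P Q) (hP : IsLatticePolytope P) :
    IsLatticePolytope Q := by
  induction h with
  | refl => exact hP
  | tail _ hstep ih => exact hstep.isLatticePolytope ih

lemma symm (h : MutationEquiv P Q) (hP : IsLatticePolytope P) : MutationEquiv Q P := by
  induction h with
  | refl => exact Relation.ReflTransGen.refl
  | tail hPR hstep ih => exact .head (hstep.symm (isLatticePolytope hPR hP)) ih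

end MutationEquiv

/-- Mutation-equivalence of Fano polygons is an equivalence relation: reflexive,
symmetric and transitive. -/
theorem mutationEquiv_is_equivalence :
    (∀ P : Set (ℝ × ℝ), IsFanoPolygon P → MutationEquiv P P) ∧
    (∀ P Q : Set (ℝ × ℝ), IsFanoPolygon P → IsFanoPolygon Q →
      MutationEquiv P Q → MutationEquiv Q P) ∧
    (∀ P Q R : Set (ℝ × ℝ), IsFanoPolygon P → IsFanoPolygon Q → IsFanoPolygon R →
      MutationEquiv P Q → MutationEquiv Q R → MutationEquiv P R) :=
  ⟨fun _ _ => Relation.ReflTransGen.refl, fun _ _ hP _ h => h.symm hP.1,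
    fun _ _ _ _ _ _ => Relation.ReflTransGen.trans⟩
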